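/- arXiv:1702.07700 — 3 statements merged into one kernel-verified Lean document; each statement's English description precedes it below -/
import Mathlib

section
/- Consider the recursion X^{j+1} = (D + E^j) X^j on a finite-dimensional Hilbert space V, where D ∈ L(V) is deterministic, X^0 is F_0-measurable and square-integrable, each E^j is an L(V)-valued random variable that is F_{t_{j+1}}-measurable with E[E^j | F_{t_j}] = 0 and E[E^j ⊗ E^j | F_{t_j}] = E[E^j ⊗ E^j]. Then E[X^{j+1} ⊗ X^{j+1}] = S_j ⋯ S_0 E[X^0 ⊗ X^0], where S_j = D ⊗ D + E[E^j ⊗ E^j] ∈ L(V ⊗ V). -/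
open MeasureTheory Filter
open scoped Kronecker Matrix

/-!
Write `Y = X^j ⊗ X^j`. Expanding `X^{j+1} ⊗ X^{j+1} = ((D + E^j) ⊗ (D + E^j)) Y` gives four
terms. Since `Y` is `F_{t_j}`-measurable, it can be pulled out of the conditional expectation of
each term: the cross terms `D ⊗ E^j` and `E^j ⊗ D` then average to zero because `E^j` has
conditional mean zero, and `E^j ⊗ E^j` averages to `E[E^j ⊗ E^j]` because its conditional
second moment is deterministic. Hence `E[X^{j+1} ⊗ X^{j+1}] = S_j E[X^j ⊗ X^j]`, and the
theorem follows by induction on `j`.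
-/

section ConditionalExpectation

variable {Ω : Type*} {m m0 : MeasurableSpace Ω} {μ : Measure Ω}

theorem integral_mul_eq_of_condExp_ae_eq_const (hm : m ≤ m0) [SigmaFinite (μ.trim hm)]
    {f g : Ω → ℝ} {c : ℝ} (hg : StronglyMeasurable[m] g) (hf : Integrable f μ)
    (hfg : Integrable (fun ω => f ω * g ω) μ) (hc : μ[f | m] =ᵐ[μ] fun _ => c) :
    ∫ ω, f ω * g ω ∂μ = c * ∫ ω, g ω ∂μ := by
  have hgf : Integrable (g * f) μ := hfg.congr (ae_of_all _ fun ω => mul_comm (f ω) (g ω))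
  have hpull : μ[g * f | m] =ᵐ[μ] fun ω => c * g ω := by
    filter_upwards [condExp_mul_of_stronglyMeasurable_left hg hgf hf, hc] with ω h₁ h₂
    rw [h₁, Pi.mul_apply, h₂, mul_comm]
  calc ∫ ω, f ω * g ω ∂μ = ∫ ω, (g * f) ω ∂μ := by simp only [Pi.mul_apply, mul_comm]
    _ = ∫ ω, μ[g * f | m] ω ∂μ := (integral_condExp hm).symm
    _ = c * ∫ ω, g ω ∂μ := by rw [integral_congr_ae hpull, integral_const_mul]

end ConditionalExpectation

theorem Matrix.mulVec_apply_mul_mulVec_apply {ι κ R : Type*} [Fintype κ] [CommSemiring R]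
    (A : Matrix ι κ R) (x : κ → R) (a b : ι) :
    (A *ᵥ x) a * (A *ᵥ x) b = ((A ⊗ₖ A) *ᵥ fun q => x q.1 * x q.2) (a, b) := by
  simp only [Matrix.mulVec, dotProduct, Finset.sum_mul_sum, Fintype.sum_prod_type,
    Matrix.kroneckerMap_apply]
  exact Finset.sum_congr rfl fun k _ => Finset.sum_congr rfl fun l _ => by ring

theorem Matrix.kronecker_add_self_apply_mul {ι R : Type*} [CommSemiring R]
    (D F : Matrix ι ι R) (a b : ι) (q : ι × ι) (y : R) :
    ((D + F) ⊗ₖ (D + F)) (a, b) q * y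
      = D a q.1 * D b q.2 * y + D a q.1 * (F b q.2 * y) + D b q.2 * (F a q.1 * y)
          + (F ⊗ₖ F) (a, b) q * y := by
  simp only [Matrix.kroneckerMap_apply, Matrix.add_apply]
  ring

theorem stronglyMeasurable_mulVec_apply {Ω ι κ : Type*} [Fintype κ] {m : MeasurableSpace Ω}
    {A : Ω → Matrix ι κ ℝ} {x : Ω → κ → ℝ}
    (hA : ∀ k l, StronglyMeasurable fun ω => A ω k l)
    (hx : ∀ l, StronglyMeasurable fun ω => x ω l) (k : ι) :
    StronglyMeasurable fun ω => (A ω *ᵥ x ω) k :=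
  Finset.stronglyMeasurable_fun_sum _ fun l _ => (hA k l).mul (hx l)

section SecondMoment

variable {Ω ι : Type*} {m m0 : MeasurableSpace Ω} {μ : Measure Ω}
  (hm : m ≤ m0) [SigmaFinite (μ.trim hm)]
  (D : Matrix ι ι ℝ) {E : Ω → Matrix ι ι ℝ} {x : Ω → ι → ℝ}
  (hx : ∀ k, StronglyMeasurable[m] fun ω => x ω k)
  (hE : ∀ k l, Integrable (fun ω => E ω k l) μ)
  (hEE : ∀ p q : ι × ι, Integrable (fun ω => (E ω ⊗ₖ E ω) p q) μ)
  (hxx : ∀ q : ι × ι, Integrable (fun ω => x ω q.1 * x ω q.2) μ)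
  (hExx : ∀ k l (q : ι × ι), Integrable (fun ω => E ω k l * (x ω q.1 * x ω q.2)) μ)
  (hEExx : ∀ p q : ι × ι,
    Integrable (fun ω => (E ω ⊗ₖ E ω) p q * (x ω q.1 * x ω q.2)) μ)
  (hmean : ∀ k l, μ[(fun ω => E ω k l) | m] =ᵐ[μ] 0)
  (hcov : ∀ p q : ι × ι,
    μ[(fun ω => (E ω ⊗ₖ E ω) p q) | m] =ᵐ[μ] fun _ => ∫ ω, (E ω ⊗ₖ E ω) p q ∂μ)
include hm hx hE hEE hxx hExx hEExx hmean hcov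

theorem integral_kronecker_add_mul_eq (a b : ι) (q : ι × ι) :
    ∫ ω, ((D + E ω) ⊗ₖ (D + E ω)) (a, b) q * (x ω q.1 * x ω q.2) ∂μ
      = (D ⊗ₖ D + Matrix.of fun p q => ∫ ω, (E ω ⊗ₖ E ω) p q ∂μ) (a, b) q
          * ∫ ω, x ω q.1 * x ω q.2 ∂μ := by
  have hY : StronglyMeasurable[m] fun ω => x ω q.1 * x ω q.2 := (hx q.1).mul (hx q.2)
  have hcross : ∀ k l, ∫ ω, E ω k l * (x ω q.1 * x ω q.2) ∂μ = 0 := fun k l => by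
    rw [integral_mul_eq_of_condExp_ae_eq_const (c := 0) hm hY (hE k l) (hExx k l q) (hmean k l),
      zero_mul]
  have hquad := integral_mul_eq_of_condExp_ae_eq_const hm hY (hEE (a, b) q) (hEExx (a, b) q)
    (hcov (a, b) q)
  have i₁ := (hxx q).const_mul (D a q.1 * D b q.2)
  have i₂ := (hExx b q.2 q).const_mul (D a q.1)
  have i₃ := (hExx a q.1 q).const_mul (D b q.2)
  simp only [Matrix.kronecker_add_self_apply_mul]
  calc _ = D a q.1 * D b q.2 * ∫ ω, x ω q.1 * x ω q.2 ∂μ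
          + D a q.1 * ∫ ω, E ω b q.2 * (x ω q.1 * x ω q.2) ∂μ
          + D b q.2 * ∫ ω, E ω a q.1 * (x ω q.1 * x ω q.2) ∂μ
          + ∫ ω, (E ω ⊗ₖ E ω) (a, b) q * (x ω q.1 * x ω q.2) ∂μ := by
        rw [integral_add, integral_add, integral_add, integral_const_mul, integral_const_mul,
          integral_const_mul]
        exacts [i₁, i₂, i₁.add i₂, i₃, (i₁.add i₂).add i₃, hEExx (a, b) q]
    _ = _ := by
        rw [hcross, hcross, hquad]
        simp only [Matrix.add_apply, Matrix.kroneckerMap_apply, Matrix.of_apply]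
        ring

theorem integral_mulVec_mul_mulVec_eq [Fintype ι] :
    (fun p : ι × ι => ∫ ω, ((D + E ω) *ᵥ x ω) p.1 * ((D + E ω) *ᵥ x ω) p.2 ∂μ)
      = (D ⊗ₖ D + Matrix.of fun p q => ∫ ω, (E ω ⊗ₖ E ω) p q ∂μ)
          *ᵥ fun p : ι × ι => ∫ ω, x ω p.1 * x ω p.2 ∂μ := by
  funext ⟨a, b⟩
  have hint : ∀ q : ι × ι,
      Integrable (fun ω => ((D + E ω) ⊗ₖ (D + E ω)) (a, b) q * (x ω q.1 * x ω q.2)) μ :=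
    fun q => by
      simp only [Matrix.kronecker_add_self_apply_mul]
      exact ((((hxx q).const_mul _).add ((hExx b q.2 q).const_mul (D a q.1))).add
        ((hExx a q.1 q).const_mul (D b q.2))).add (hEExx (a, b) q)
  simp only [Matrix.mulVec_apply_mul_mulVec_apply]
  simp only [Matrix.mulVec, dotProduct]
  rw [integral_finsetSum _ fun q _ => hint q]
  exact Finset.sum_congr rfl fun q _ =>
    integral_kronecker_add_mul_eq hm D hx hE hEE hxx hExx hEExx hmean hcov a b q

end SecondMoment

/-- Consider the recursion `X^{j+1} = (D + E^j) X^j` on a finite-dimensional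
Hilbert space `V = ℝ^N` (operators written as matrices in an orthonormal basis), where `D` is
deterministic, `X^0` is `F_0`-measurable and square-integrable, each `E^j` is
`F_{t_{j+1}}`-measurable with `E[E^j | F_{t_j}] = 0` and
`E[E^j ⊗ E^j | F_{t_j}] = E[E^j ⊗ E^j]` (entrywise, the tensor `E^j ⊗ E^j` being the Kronecker
square acting on `V ⊗ V = ℝ^{N×N}`). All random variables are square-integrable so that all
tensor expectations exist. Then `E[X^{j+1} ⊗ X^{j+1}] = S_j ⋯ S_0 E[X^0 ⊗ X^0]`, where
`S_j = D ⊗ D + E[E^j ⊗ E^j]`. -/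
theorem stmt2
    {Ω : Type*} {m0 : MeasurableSpace Ω} (μ : Measure Ω) [IsProbabilityMeasure μ]
    (ℱ : Filtration ℕ m0) (N : ℕ)
    (D : Matrix (Fin N) (Fin N) ℝ)
    (E : ℕ → Ω → Matrix (Fin N) (Fin N) ℝ)
    (X : ℕ → Ω → Fin N → ℝ)
    (hrec : ∀ j ω, X (j + 1) ω = (D + E j ω).mulVec (X j ω))
    (hmeasE : ∀ j k l, StronglyMeasurable[ℱ (j + 1)] fun ω => E j ω k l)
    (hL2E : ∀ j k l, MemLp (fun ω => E j ω k l) 2 μ)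
    (hmean : ∀ j k l, μ[(fun ω => E j ω k l) | ℱ j] =ᵐ[μ] 0)
    (hcov : ∀ j (p q : Fin N × Fin N),
      μ[(fun ω => (E j ω ⊗ₖ E j ω) p q) | ℱ j]
        =ᵐ[μ] fun _ => ∫ ω, (E j ω ⊗ₖ E j ω) p q ∂μ)
    (hmeasX0 : ∀ k, StronglyMeasurable[ℱ 0] fun ω => X 0 ω k)
    (hL2X : ∀ j k, MemLp (fun ω => X j ω k) 2 μ)
    (hint1 : ∀ j k l (p : Fin N × Fin N),
      Integrable (fun ω => E j ω k l * (X j ω p.1 * X j ω p.2)) μ)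
    (hint2 : ∀ j (p q : Fin N × Fin N),
      Integrable (fun ω => (E j ω ⊗ₖ E j ω) p q * (X j ω q.1 * X j ω q.2)) μ)
    (S : ℕ → Matrix (Fin N × Fin N) (Fin N × Fin N) ℝ)
    (hS : ∀ j, S j = D ⊗ₖ D + Matrix.of fun p q => ∫ ω, (E j ω ⊗ₖ E j ω) p q ∂μ)
    (P : ℕ → Matrix (Fin N × Fin N) (Fin N × Fin N) ℝ)
    (hP0 : P 0 = S 0) (hPs : ∀ j, P (j + 1) = S (j + 1) * P j) :
    ∀ j, (fun p : Fin N × Fin N => ∫ ω, X (j + 1) ω p.1 * X (j + 1) ω p.2 ∂μ)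
      = (P j).mulVec (fun p : Fin N × Fin N => ∫ ω, X 0 ω p.1 * X 0 ω p.2 ∂μ) := by
  have hmeasX : ∀ j k, StronglyMeasurable[ℱ j] fun ω => X j ω k := by
    intro j
    induction j with
    | zero => exact hmeasX0
    | succ j ih =>
      simp only [hrec]
      exact stronglyMeasurable_mulVec_apply
        (fun k l => stronglyMeasurable_const.add (hmeasE j k l))
        (fun l => (ih l).mono (ℱ.mono j.le_succ))
  have hstep : ∀ j, (fun p : Fin N × Fin N => ∫ ω, X (j + 1) ω p.1 * X (j + 1) ω p.2 ∂μ)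
      = S j *ᵥ fun p : Fin N × Fin N => ∫ ω, X j ω p.1 * X j ω p.2 ∂μ := fun j => by
    simp only [hrec, hS]
    exact integral_mulVec_mul_mulVec_eq (ℱ.le j) D (hmeasX j)
      (fun k l => (hL2E j k l).integrable one_le_two)
      (fun p q => (hL2E j p.1 q.1).integrable_mul (hL2E j p.2 q.2))
      (fun q => (hL2X j q.1).integrable_mul (hL2X j q.2)) (hint1 j) (hint2 j) (hmean j) (hcov j)
  intro j
  induction j with
  | zero => rw [hP0]; exact hstep 0
  | succ j ih => rw [hPs, ← Matrix.mulVec_mulVec, ← ih, hstep]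
end

section
/- Under the assumptions of the previous recursion setup, if lim_{j→∞} ‖S_j ⋯ S_0‖_{L(V⊗V)} = 0, then the zero solution of the recursion X^{j+1} = (D + E^j)X^j is asymptotically mean-square stable: for any square-integrable F_0-measurable initial value X^0, one has E[‖X^j‖²] → 0 as j → ∞, and moreover for every ε > 0 there is δ > 0 such that E[‖X^0‖²] < δ implies E[‖X^j‖²] < ε for all j. -/
/-! The second-moment matrix `Z_j = E[X^j ⊗ X^j]` evolves linearly. Expanding
`X^{j+1} ⊗ X^{j+1} = ((D + E^j) ⊗ (D + E^j)) (X^j ⊗ X^j)` and conditioning on `F_j`, the cross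
terms vanish because `E^j` has conditional mean zero, and `E[E^j ⊗ E^j | F_j]` is deterministic,
so `Z_{j+1} = S_j Z_j` and `Z_{j+1} = (S_j ⋯ S_0) Z_0`. As `E‖X^j‖²` is the trace of `Z_j` and
every entry of `Z_0` is bounded by `E‖X^0‖²`, this gives
`E‖X^{j+1}‖² ≤ N² ‖S_j ⋯ S_0‖ E‖X^0‖²`, from which both claims follow.

Integrability of the products `X^j_k X^j_l E^j_{pk} E^j_{ql}` also comes from conditioning:
since `E[(E^j_{pk})² | F_j]` is constant, `E[(E^j_{pk} X^j_k)²] = E[(E^j_{pk})²] E[(X^j_k)²]`,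
so `E^j_{pk} X^j_k` is square-integrable. -/

open MeasureTheory Filter
open scoped Kronecker

noncomputable section

/-- A solution process of the linear recursion `X^{j+1} = (D + E^j) X^j` with
`F_0`-measurable square-integrable initial value (all iterates square-integrable, so that
all tensor expectations exist). -/
def IsSolution {Ω : Type*} {m0 : MeasurableSpace Ω} (μ : MeasureTheory.Measure Ω)
    (ℱ : MeasureTheory.Filtration ℕ m0) {N : ℕ}
    (D : Matrix (Fin N) (Fin N) ℝ) (E : ℕ → Ω → Matrix (Fin N) (Fin N) ℝ)
    (X : ℕ → Ω → Fin N → ℝ) : Prop :=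
  (∀ j ω, X (j + 1) ω = (D + E j ω).mulVec (X j ω))
    ∧ (∀ k, StronglyMeasurable[ℱ 0] fun ω => X 0 ω k)
    ∧ (∀ j k, MeasureTheory.MemLp (fun ω => X j ω k) 2 μ)

/-- The mean-square (second moment) `E[‖X^j‖²]` of a solution process. -/
noncomputable def secondMoment {Ω : Type*} {m0 : MeasurableSpace Ω}
    (μ : MeasureTheory.Measure Ω) {N : ℕ} (X : ℕ → Ω → Fin N → ℝ) (j : ℕ) : ℝ :=
  ∫ ω, ∑ k, (X j ω k) ^ 2 ∂μ

/-- Mean-square stability of the zero solution of the recursion `X^{j+1} = (D + E^j)X^j`. -/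
def MeanSquareStable {Ω : Type*} {m0 : MeasurableSpace Ω} (μ : MeasureTheory.Measure Ω)
    (ℱ : MeasureTheory.Filtration ℕ m0) {N : ℕ}
    (D : Matrix (Fin N) (Fin N) ℝ) (E : ℕ → Ω → Matrix (Fin N) (Fin N) ℝ) : Prop :=
  ∀ ε > (0 : ℝ), ∃ δ > (0 : ℝ), ∀ X : ℕ → Ω → Fin N → ℝ,
    IsSolution μ ℱ D E X → secondMoment μ X 0 < δ → ∀ j, secondMoment μ X j < ε

/-- Asymptotic mean-square stability of the zero solution: mean-square stability together with
the existence of `δ > 0` such that `E[‖X^0‖²] < δ` implies `E[‖X^j‖²] → 0`. -/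
def AsympMeanSquareStable {Ω : Type*} {m0 : MeasurableSpace Ω} (μ : MeasureTheory.Measure Ω)
    (ℱ : MeasureTheory.Filtration ℕ m0) {N : ℕ}
    (D : Matrix (Fin N) (Fin N) ℝ) (E : ℕ → Ω → Matrix (Fin N) (Fin N) ℝ) : Prop :=
  MeanSquareStable μ ℱ D E ∧
    ∃ δ > (0 : ℝ), ∀ X : ℕ → Ω → Fin N → ℝ,
      IsSolution μ ℱ D E X → secondMoment μ X 0 < δ →
        Filter.Tendsto (secondMoment μ X) Filter.atTop (nhds 0)

namespace MeasureTheory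

variable {Ω : Type*} {m m0 : MeasurableSpace Ω} {μ : Measure Ω} [IsFiniteMeasure μ]

theorem lintegral_mul_ofReal_of_condExp_eq_const (hm : m ≤ m0) {f : Ω → ENNReal}
    (hf : Measurable[m] f) {g : Ω → ℝ} (hg : Integrable g μ) (hg0 : 0 ≤ᵐ[μ] g) {c : ℝ}
    (hc : μ[g|m] =ᵐ[μ] fun _ => c) :
    ∫⁻ ω, f ω * ENNReal.ofReal (g ω) ∂μ = ENNReal.ofReal c * ∫⁻ ω, f ω ∂μ := by
  have htrim : (μ.withDensity fun ω => ENNReal.ofReal (g ω)).trim hm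
      = (ENNReal.ofReal c • μ).trim hm := by
    refine @Measure.ext _ m _ _ fun s hs => ?_
    rw [trim_measurableSet_eq hm hs, trim_measurableSet_eq hm hs, withDensity_apply _ (hm s hs),
      ← ofReal_integral_eq_lintegral_ofReal hg.integrableOn (ae_restrict_of_ae hg0),
      ← setIntegral_condExp hm hg hs, setIntegral_congr_ae (hm s hs) (hc.mono fun _ h _ => h),
      setIntegral_const, Measure.smul_apply, smul_eq_mul, smul_eq_mul,
      ENNReal.ofReal_mul measureReal_nonneg, ofReal_measureReal, mul_comm]
  calc ∫⁻ ω, f ω * ENNReal.ofReal (g ω) ∂μ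
      = ∫⁻ ω, f ω ∂(μ.withDensity fun ω => ENNReal.ofReal (g ω)) := by
        rw [lintegral_withDensity_eq_lintegral_mul₀ hg.1.aemeasurable.ennreal_ofReal
          (hf.mono hm le_rfl).aemeasurable]
        simp only [Pi.mul_apply, mul_comm]
    _ = ∫⁻ ω, f ω ∂(ENNReal.ofReal c • μ) := by
        rw [← lintegral_trim hm hf, htrim, lintegral_trim hm hf]
    _ = ENNReal.ofReal c * ∫⁻ ω, f ω ∂μ := lintegral_smul_measure _ _

theorem Integrable.mul_of_condExp_eq_const (hm : m ≤ m0) {f g : Ω → ℝ}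
    (hf : StronglyMeasurable[m] f) (hfi : Integrable f μ) (hg : Integrable g μ)
    (hg0 : 0 ≤ᵐ[μ] g) {c : ℝ} (hc : μ[g|m] =ᵐ[μ] fun _ => c) :
    Integrable (fun ω => f ω * g ω) μ := by
  refine ⟨(hf.mono hm).aestronglyMeasurable.mul hg.1, ?_⟩
  have hfg : ∫⁻ ω, ‖f ω * g ω‖ₑ ∂μ = ENNReal.ofReal c * ∫⁻ ω, ‖f ω‖ₑ ∂μ := by
    rw [← lintegral_mul_ofReal_of_condExp_eq_const hm hf.enorm hg hg0 hc]
    refine lintegral_congr_ae (hg0.mono fun ω hω => ?_)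
    simp only [enorm_mul, Real.enorm_eq_ofReal hω]
  rw [HasFiniteIntegral, hfg]
  exact ENNReal.mul_lt_top ENNReal.ofReal_lt_top hfi.2

theorem integral_mul_of_condExp_eq_const (hm : m ≤ m0) {f g : Ω → ℝ}
    (hf : StronglyMeasurable[m] f) (hg : Integrable g μ)
    (hfg : Integrable (fun ω => f ω * g ω) μ) {c : ℝ} (hc : μ[g|m] =ᵐ[μ] fun _ => c) :
    ∫ ω, f ω * g ω ∂μ = c * ∫ ω, f ω ∂μ := by
  calc ∫ ω, f ω * g ω ∂μ = ∫ ω, (μ[f * g|m]) ω ∂μ := (integral_condExp hm).symm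
    _ = ∫ ω, f ω * c ∂μ := by
        refine integral_congr_ae ?_
        filter_upwards [condExp_mul_of_stronglyMeasurable_left hf hfg hg, hc] with ω h1 h2
        rw [h1, Pi.mul_apply, h2]
    _ = c * ∫ ω, f ω ∂μ := by rw [integral_mul_const, mul_comm]

theorem MemLp.mul_of_condExp_mul_self_eq_const (hm : m ≤ m0) {α x : Ω → ℝ}
    (hx : StronglyMeasurable[m] x) (hx2 : MemLp x 2 μ) (hα : MemLp α 2 μ) {c : ℝ}
    (hαα : μ[fun ω => α ω * α ω|m] =ᵐ[μ] fun _ => c) :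
    MemLp (fun ω => α ω * x ω) 2 μ := by
  have hαx := hα.1.mul (hx.mono hm).aestronglyMeasurable
  refine (memLp_two_iff_integrable_sq hαx).2 ?_
  have h := Integrable.mul_of_condExp_eq_const hm (hx.pow 2) hx2.integrable_sq
    (hα.integrable_mul hα) (ae_of_all _ fun ω => mul_self_nonneg (α ω)) hαα
  exact h.congr (ae_of_all _ fun ω => by simp only [Pi.mul_apply, Pi.pow_apply]; ring)

theorem MemLp.add_mul_of_condExp_mul_self_eq_const (hm : m ≤ m0) (a : ℝ) {α x : Ω → ℝ}
    (hx : StronglyMeasurable[m] x) (hx2 : MemLp x 2 μ) (hα : MemLp α 2 μ) {c : ℝ}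
    (hαα : μ[fun ω => α ω * α ω|m] =ᵐ[μ] fun _ => c) :
    MemLp (fun ω => (a + α ω) * x ω) 2 μ :=
  ((hx2.const_mul a).add (hx2.mul_of_condExp_mul_self_eq_const hm hx hα hαα)).ae_eq
    (ae_of_all _ fun ω => by simp only [Pi.add_apply]; ring)

theorem condExp_add_mul_add_eq_const (hm : m ≤ m0) (a b : ℝ) {α β : Ω → ℝ}
    (hα : MemLp α 2 μ) (hβ : MemLp β 2 μ) (hαm : μ[α|m] =ᵐ[μ] 0) (hβm : μ[β|m] =ᵐ[μ] 0)
    {c : ℝ} (hαβ : μ[fun ω => α ω * β ω|m] =ᵐ[μ] fun _ => c) :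
    μ[fun ω => (a + α ω) * (b + β ω)|m] =ᵐ[μ] fun _ => a * b + c := by
  have hαi := hα.integrable one_le_two
  have hβi := hβ.integrable one_le_two
  have hαβi : Integrable (fun ω => α ω * β ω) μ := hα.integrable_mul hβ
  have hsplit : (fun ω => (a + α ω) * (b + β ω))
      = (fun _ => a * b) + (a • β + b • α + fun ω => α ω * β ω) := by
    funext ω; simp only [Pi.add_apply, Pi.smul_apply, smul_eq_mul]; ring
  rw [hsplit]
  filter_upwards [
    condExp_add (integrable_const (a * b)) (((hβi.smul a).add (hαi.smul b)).add hαβi) m,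
    condExp_add ((hβi.smul a).add (hαi.smul b)) hαβi m, condExp_add (hβi.smul a) (hαi.smul b) m,
    condExp_smul a β m, condExp_smul b α m, hαm, hβm, hαβ] with ω h1 h2 h3 h4 h5 h6 h7 h8
  simp only [h1, h2, h3, h4, h5, h6, h7, h8, condExp_const hm, Pi.add_apply, Pi.smul_apply,
    Pi.zero_apply, smul_eq_mul]
  ring

theorem integral_add_mul_mul_add_mul (hm : m ≤ m0) (a b : ℝ) {x y α β : Ω → ℝ}
    (hx : StronglyMeasurable[m] x) (hy : StronglyMeasurable[m] y)
    (hx2 : MemLp x 2 μ) (hy2 : MemLp y 2 μ) (hα : MemLp α 2 μ) (hβ : MemLp β 2 μ)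
    (hαm : μ[α|m] =ᵐ[μ] 0) (hβm : μ[β|m] =ᵐ[μ] 0) {cα cβ : ℝ}
    (hαα : μ[fun ω => α ω * α ω|m] =ᵐ[μ] fun _ => cα)
    (hββ : μ[fun ω => β ω * β ω|m] =ᵐ[μ] fun _ => cβ)
    {c : ℝ} (hαβ : μ[fun ω => α ω * β ω|m] =ᵐ[μ] fun _ => c) :
    ∫ ω, (a + α ω) * x ω * ((b + β ω) * y ω) ∂μ = (a * b + c) * ∫ ω, x ω * y ω ∂μ := by
  have hint := (hx2.add_mul_of_condExp_mul_self_eq_const hm a hx hα hαα).integrable_mul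
    (hy2.add_mul_of_condExp_mul_self_eq_const hm b hy hβ hββ)
  have hg : Integrable (fun ω => (a + α ω) * (b + β ω)) μ :=
    ((memLp_const a).add hα).integrable_mul ((memLp_const b).add hβ)
  calc ∫ ω, (a + α ω) * x ω * ((b + β ω) * y ω) ∂μ
      = ∫ ω, x ω * y ω * ((a + α ω) * (b + β ω)) ∂μ := integral_congr_ae
        (ae_of_all _ fun ω => by ring)
    _ = (a * b + c) * ∫ ω, x ω * y ω ∂μ :=
        integral_mul_of_condExp_eq_const hm (hx.mul hy) hg
          (hint.congr (ae_of_all _ fun ω => by simp only [Pi.mul_apply]; ring))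
          (condExp_add_mul_add_eq_const hm a b hα hβ hαm hβm hαβ)

end MeasureTheory

section Tensor

variable {Ω ι : Type*} [Fintype ι] {m m0 : MeasurableSpace Ω} {μ : Measure Ω}

/-- The second-moment matrix `E[x xᵀ]`, flattened to a vector on `ι × ι` so that Kronecker
products act on it by `mulVec`. -/
def secondMomentTensor (μ : Measure Ω) (x : Ω → ι → ℝ) : ι × ι → ℝ :=
  fun r => ∫ ω, x ω r.1 * x ω r.2 ∂μ

theorem secondMomentTensor_add_mulVec [IsFiniteMeasure μ] (hm : m ≤ m0) (D : Matrix ι ι ℝ)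
    {A : Ω → Matrix ι ι ℝ} {x : Ω → ι → ℝ} (hx : ∀ k, StronglyMeasurable[m] fun ω => x ω k)
    (hx2 : ∀ k, MemLp (fun ω => x ω k) 2 μ) (hA2 : ∀ k l, MemLp (fun ω => A ω k l) 2 μ)
    (hAm : ∀ k l, μ[fun ω => A ω k l|m] =ᵐ[μ] 0)
    (hAA : ∀ p q, μ[fun ω => (A ω ⊗ₖ A ω) p q|m] =ᵐ[μ] fun _ => ∫ ω, (A ω ⊗ₖ A ω) p q ∂μ) :
    secondMomentTensor μ (fun ω => (D + A ω).mulVec (x ω))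
      = (D ⊗ₖ D + Matrix.of fun p q => ∫ ω, (A ω ⊗ₖ A ω) p q ∂μ).mulVec
          (secondMomentTensor μ x) := by
  have hAA' : ∀ p k q l, μ[fun ω => A ω p k * A ω q l|m] =ᵐ[μ]
      fun _ => ∫ ω, A ω p k * A ω q l ∂μ := fun p k q l => by
    simpa only [Matrix.kroneckerMap_apply] using hAA (p, q) (k, l)
  have hterm : ∀ p q k l, Integrable
      (fun ω => (D p k + A ω p k) * x ω k * ((D q l + A ω q l) * x ω l)) μ := fun p q k l =>
    ((hx2 k).add_mul_of_condExp_mul_self_eq_const hm (D p k) (hx k) (hA2 p k)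
      (hAA' p k p k)).integrable_mul
    ((hx2 l).add_mul_of_condExp_mul_self_eq_const hm (D q l) (hx l) (hA2 q l) (hAA' q l q l))
  funext ⟨p, q⟩
  simp only [secondMomentTensor, Matrix.mulVec, dotProduct, Matrix.add_apply, Finset.sum_mul_sum,
    Fintype.sum_prod_type, Matrix.kroneckerMap_apply, Matrix.of_apply]
  rw [integral_finsetSum _ fun k _ => integrable_finsetSum _ fun l _ => hterm p q k l]
  refine Finset.sum_congr rfl fun k _ => ?_
  rw [integral_finsetSum _ fun l _ => hterm p q k l]
  exact Finset.sum_congr rfl fun l _ => integral_add_mul_mul_add_mul hm _ _ (hx k) (hx l)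
    (hx2 k) (hx2 l) (hA2 p k) (hA2 q l) (hAm p k) (hAm q l) (hAA' p k p k) (hAA' q l q l)
    (hAA' p k q l)

theorem integral_sum_sq_eq_sum_secondMomentTensor {x : Ω → ι → ℝ}
    (hx2 : ∀ k, MemLp (fun ω => x ω k) 2 μ) :
    ∫ ω, ∑ k, x ω k ^ 2 ∂μ = ∑ k, secondMomentTensor μ x (k, k) := by
  rw [integral_finsetSum _ fun k _ => (hx2 k).integrable_sq]
  simp only [secondMomentTensor, sq]

theorem abs_secondMomentTensor_le {x : Ω → ι → ℝ} (hx2 : ∀ k, MemLp (fun ω => x ω k) 2 μ)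
    (r : ι × ι) : |secondMomentTensor μ x r| ≤ ∫ ω, ∑ k, x ω k ^ 2 ∂μ := by
  rw [← Real.norm_eq_abs, secondMomentTensor]
  refine norm_integral_le_of_norm_le
    (integrable_finsetSum _ fun k _ => (hx2 k).integrable_sq) (ae_of_all _ fun ω => ?_)
  have h1 := Finset.single_le_sum (fun k _ => sq_nonneg (x ω k)) (Finset.mem_univ r.1)
  have h2 := Finset.single_le_sum (fun k _ => sq_nonneg (x ω k)) (Finset.mem_univ r.2)
  rw [Real.norm_eq_abs, abs_mul]
  rcases le_total |x ω r.1| |x ω r.2| with h | h <;>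
    nlinarith [abs_nonneg (x ω r.1), abs_nonneg (x ω r.2), sq_abs (x ω r.1), sq_abs (x ω r.2)]

theorem norm_toLp_le_of_forall_abs_le {κ : Type*} [Fintype κ] (v : κ → ℝ) {B : ℝ}
    (hB : 0 ≤ B) (h : ∀ i, |v i| ≤ B) : ‖WithLp.toLp 2 v‖ ≤ √(Fintype.card κ) * B := by
  rw [EuclideanSpace.norm_eq, ← Real.sqrt_sq hB, ← Real.sqrt_mul (Nat.cast_nonneg _)]
  refine Real.sqrt_le_sqrt ?_
  calc ∑ i, ‖(WithLp.toLp 2 v) i‖ ^ 2 ≤ ∑ _i : κ, B ^ 2 :=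
        Finset.sum_le_sum fun i _ => by
          simpa using pow_le_pow_left₀ (abs_nonneg _) (h i) 2
    _ = Fintype.card κ * B ^ 2 := by simp

theorem sum_diag_le_card_mul_norm_toLp (v : ι × ι → ℝ) :
    ∑ k, v (k, k) ≤ Fintype.card ι * ‖WithLp.toLp 2 v‖ :=
  calc ∑ k, v (k, k) ≤ ∑ _k : ι, ‖WithLp.toLp 2 v‖ :=
        Finset.sum_le_sum fun k _ => (le_abs_self _).trans
          (by simpa using PiLp.norm_apply_le (WithLp.toLp 2 v) (k, k))
    _ = Fintype.card ι * ‖WithLp.toLp 2 v‖ := by simp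

theorem sum_diag_mulVec_secondMomentTensor_le [DecidableEq ι] (P : Matrix (ι × ι) (ι × ι) ℝ)
    {x : Ω → ι → ℝ} (hx2 : ∀ k, MemLp (fun ω => x ω k) 2 μ) :
    ∑ k, P.mulVec (secondMomentTensor μ x) (k, k)
      ≤ Fintype.card ι ^ 2 * ‖Matrix.toEuclideanCLM (𝕜 := ℝ) P‖ * ∫ ω, ∑ k, x ω k ^ 2 ∂μ := by
  have hZ : ‖WithLp.toLp 2 (secondMomentTensor μ x)‖ ≤ Fintype.card ι * ∫ ω, ∑ k, x ω k ^ 2 ∂μ := by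
    refine (norm_toLp_le_of_forall_abs_le _ ?_ (abs_secondMomentTensor_le hx2)).trans_eq ?_
    · exact integral_nonneg fun ω => Finset.sum_nonneg fun k _ => sq_nonneg _
    · rw [Fintype.card_prod, Nat.cast_mul, Real.sqrt_mul_self (Nat.cast_nonneg _)]
  calc ∑ k, P.mulVec (secondMomentTensor μ x) (k, k)
      ≤ Fintype.card ι * ‖WithLp.toLp 2 (P.mulVec (secondMomentTensor μ x))‖ :=
        sum_diag_le_card_mul_norm_toLp _
    _ = Fintype.card ι * ‖Matrix.toEuclideanCLM (𝕜 := ℝ) P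
          (WithLp.toLp 2 (secondMomentTensor μ x))‖ := by rw [Matrix.toEuclideanCLM_toLp]
    _ ≤ Fintype.card ι * (‖Matrix.toEuclideanCLM (𝕜 := ℝ) P‖
          * (Fintype.card ι * ∫ ω, ∑ k, x ω k ^ 2 ∂μ)) := by
        gcongr
        exact ContinuousLinearMap.le_opNorm_of_le _ hZ
    _ = _ := by ring

end Tensor

section Solution

variable {Ω : Type*} {m0 : MeasurableSpace Ω} {μ : Measure Ω} {ℱ : Filtration ℕ m0} {N : ℕ}
  {D : Matrix (Fin N) (Fin N) ℝ} {E : ℕ → Ω → Matrix (Fin N) (Fin N) ℝ}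
  {X : ℕ → Ω → Fin N → ℝ}

theorem secondMoment_nonneg (j : ℕ) : 0 ≤ secondMoment μ X j :=
  integral_nonneg fun _ => Finset.sum_nonneg fun _ _ => sq_nonneg _

theorem IsSolution.stronglyMeasurable (hX : IsSolution μ ℱ D E X)
    (hE : ∀ j k l, StronglyMeasurable[ℱ (j + 1)] fun ω => E j ω k l) (j : ℕ) (k : Fin N) :
    StronglyMeasurable[ℱ j] fun ω => X j ω k := by
  induction j generalizing k with
  | zero => exact hX.2.1 k
  | succ j ih =>
    simp only [hX.1 j, Matrix.mulVec, dotProduct, Matrix.add_apply]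
    exact Finset.stronglyMeasurable_fun_sum _ fun l _ =>
      (stronglyMeasurable_const.add (hE j k l)).mul ((ih l).mono (ℱ.mono j.le_succ))

theorem IsSolution.secondMomentTensor_succ [IsFiniteMeasure μ] (hX : IsSolution μ ℱ D E X)
    (hE : ∀ j k l, StronglyMeasurable[ℱ (j + 1)] fun ω => E j ω k l)
    (hE2 : ∀ j k l, MemLp (fun ω => E j ω k l) 2 μ)
    (hmean : ∀ j k l, μ[(fun ω => E j ω k l) | ℱ j] =ᵐ[μ] 0)
    (hcov : ∀ j (p q : Fin N × Fin N),
      μ[(fun ω => (E j ω ⊗ₖ E j ω) p q) | ℱ j] =ᵐ[μ] fun _ => ∫ ω, (E j ω ⊗ₖ E j ω) p q ∂μ)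
    (j : ℕ) :
    secondMomentTensor μ (X (j + 1))
      = (D ⊗ₖ D + Matrix.of fun p q => ∫ ω, (E j ω ⊗ₖ E j ω) p q ∂μ).mulVec
          (secondMomentTensor μ (X j)) := by
  rw [show X (j + 1) = fun ω => (D + E j ω).mulVec (X j ω) from funext (hX.1 j)]
  exact secondMomentTensor_add_mulVec (ℱ.le j) D (hX.stronglyMeasurable hE j) (hX.2.2 j)
    (hE2 j) (hmean j) (hcov j)

theorem IsSolution.secondMoment_succ_le [IsFiniteMeasure μ] (hX : IsSolution μ ℱ D E X)
    (hE : ∀ j k l, StronglyMeasurable[ℱ (j + 1)] fun ω => E j ω k l)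
    (hE2 : ∀ j k l, MemLp (fun ω => E j ω k l) 2 μ)
    (hmean : ∀ j k l, μ[(fun ω => E j ω k l) | ℱ j] =ᵐ[μ] 0)
    (hcov : ∀ j (p q : Fin N × Fin N),
      μ[(fun ω => (E j ω ⊗ₖ E j ω) p q) | ℱ j] =ᵐ[μ] fun _ => ∫ ω, (E j ω ⊗ₖ E j ω) p q ∂μ)
    {S P : ℕ → Matrix (Fin N × Fin N) (Fin N × Fin N) ℝ}
    (hS : ∀ j, S j = D ⊗ₖ D + Matrix.of fun p q => ∫ ω, (E j ω ⊗ₖ E j ω) p q ∂μ)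
    (hP0 : P 0 = S 0) (hPs : ∀ j, P (j + 1) = S (j + 1) * P j) (j : ℕ) :
    secondMoment μ X (j + 1)
      ≤ N ^ 2 * ‖Matrix.toEuclideanCLM (𝕜 := ℝ) (P j)‖ * secondMoment μ X 0 := by
  have hZ : ∀ j, secondMomentTensor μ (X (j + 1)) = (P j).mulVec (secondMomentTensor μ (X 0)) := by
    intro j
    induction j with
    | zero => rw [hX.secondMomentTensor_succ hE hE2 hmean hcov, ← hS, hP0]
    | succ j ih =>
      rw [hX.secondMomentTensor_succ hE hE2 hmean hcov, ← hS, ih, hPs, Matrix.mulVec_mulVec]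
  have h := sum_diag_mulVec_secondMomentTensor_le (P j) (hX.2.2 0)
  rw [Fintype.card_fin] at h
  unfold secondMoment
  rwa [integral_sum_sq_eq_sum_secondMomentTensor (hX.2.2 (j + 1)), hZ]

theorem meanSquareStable_of_forall_secondMoment_le {K : ℝ} (hK : 0 < K)
    (h : ∀ X, IsSolution μ ℱ D E X → ∀ j, secondMoment μ X j ≤ K * secondMoment μ X 0) :
    MeanSquareStable μ ℱ D E := by
  intro ε hε
  refine ⟨ε / K, div_pos hε hK, fun X hX hδ j => ?_⟩
  calc secondMoment μ X j ≤ K * secondMoment μ X 0 := h X hX j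
    _ < K * (ε / K) := by gcongr
    _ = ε := mul_div_cancel₀ _ hK.ne'

end Solution

/-- **Theorem 2.5.** Under the assumptions of the recursion setup (the family
`(E^j)` is `F`-compatible, square-integrable, with conditionally deterministic tensor
covariance), if `‖S_j ⋯ S_0‖_{L(V⊗V)} → 0` (where `S_j = D ⊗ D + E[E^j ⊗ E^j]`, and the
operator norm is that of the induced operator on the Euclidean tensor space), then the zero
solution of `X^{j+1} = (D + E^j)X^j` is asymptotically mean-square stable: every solution with
square-integrable `F_0`-measurable initial value satisfies `E[‖X^j‖²] → 0`, and for every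
`ε > 0` there is `δ > 0` such that `E[‖X^0‖²] < δ` implies `E[‖X^j‖²] < ε` for all `j`. -/
theorem stmt3
    {Ω : Type*} {m0 : MeasurableSpace Ω} (μ : Measure Ω) [IsProbabilityMeasure μ]
    (ℱ : Filtration ℕ m0) (N : ℕ)
    (D : Matrix (Fin N) (Fin N) ℝ)
    (E : ℕ → Ω → Matrix (Fin N) (Fin N) ℝ)
    (hmeasE : ∀ j k l, StronglyMeasurable[ℱ (j + 1)] fun ω => E j ω k l)
    (hL2E : ∀ j k l, MemLp (fun ω => E j ω k l) 2 μ)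
    (hmean : ∀ j k l, μ[(fun ω => E j ω k l) | ℱ j] =ᵐ[μ] 0)
    (hcov : ∀ j (p q : Fin N × Fin N),
      μ[(fun ω => (E j ω ⊗ₖ E j ω) p q) | ℱ j]
        =ᵐ[μ] fun _ => ∫ ω, (E j ω ⊗ₖ E j ω) p q ∂μ)
    (S : ℕ → Matrix (Fin N × Fin N) (Fin N × Fin N) ℝ)
    (hS : ∀ j, S j = D ⊗ₖ D + Matrix.of fun p q => ∫ ω, (E j ω ⊗ₖ E j ω) p q ∂μ)
    (P : ℕ → Matrix (Fin N × Fin N) (Fin N × Fin N) ℝ)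
    (hP0 : P 0 = S 0) (hPs : ∀ j, P (j + 1) = S (j + 1) * P j)
    (hnorm : Tendsto (fun j => ‖Matrix.toEuclideanCLM (𝕜 := ℝ) (P j)‖) atTop (nhds 0)) :
    (∀ X : ℕ → Ω → Fin N → ℝ, IsSolution μ ℱ D E X →
        Tendsto (secondMoment μ X) atTop (nhds 0))
      ∧ MeanSquareStable μ ℱ D E := by
  have hbound : ∀ X, IsSolution μ ℱ D E X → ∀ j, secondMoment μ X (j + 1)
      ≤ N ^ 2 * ‖Matrix.toEuclideanCLM (𝕜 := ℝ) (P j)‖ * secondMoment μ X 0 :=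
    fun X hX => hX.secondMoment_succ_le hmeasE hL2E hmean hcov hS hP0 hPs
  obtain ⟨C, hC⟩ := hnorm.bddAbove_range
  refine ⟨fun X hX => ?_, meanSquareStable_of_forall_secondMoment_le (K := max 1 (N ^ 2 * C))
    (by positivity) fun X hX j => ?_⟩
  · refine (tendsto_add_atTop_iff_nat 1).1
      (squeeze_zero (fun j => secondMoment_nonneg _) (hbound X hX) ?_)
    simpa using (hnorm.const_mul ((N : ℝ) ^ 2)).mul_const (secondMoment μ X 0)
  · cases j with
    | zero => exact le_mul_of_one_le_left (secondMoment_nonneg 0) (le_max_left _ _)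
    | succ j =>
      refine (hbound X hX j).trans (mul_le_mul_of_nonneg_right ?_ (secondMoment_nonneg 0))
      exact le_max_of_le_right (mul_le_mul_of_nonneg_left (hC ⟨j, rfl⟩) (by positivity))

end
end

section
/- Simultaneous stability (Corollary 3.7): If 2(‖F‖_{L(H)} − λ_1) + Tr(Q)‖G‖²_{L(H;L(U;H))} < 0, then for all h and Δt > 0 the backward Euler–Maruyama scheme satisfies the stability condition (1 + Δt‖F‖)² + Δt Tr(Q)‖G‖² < (1 + Δt λ_{h,1})², where λ_{h,1} ≥ λ_1. Consequently Δt(2(‖F‖ − λ_1) + Tr(Q)‖G‖²) + Δt²(‖F‖² − λ_1²) < 0. -/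
/-- **Corollary 3.7, simultaneous stability.** If
`2(‖F‖ - λ₁) + Tr(Q)‖G‖² < 0` (with `f = ‖F‖_{L(H)} ≥ 0`, `g = ‖G‖ ≥ 0`, `trQ = Tr(Q) ≥ 0`,
`λ₁ > 0` the smallest eigenvalue of `-A`), then for all `Δt > 0` and all discrete smallest
eigenvalues `λ_{h,1} ≥ λ₁` the backward Euler stability condition
`(1 + Δt f)² + Δt trQ g² < (1 + Δt λ_{h,1})²` holds; consequently
`Δt(2(f - λ₁) + trQ g²) + Δt²(f² - λ₁²) < 0`. -/
theorem stmt12 (f g trQ lam1 : ℝ) (hf : 0 ≤ f) (hg : 0 ≤ g) (htr : 0 ≤ trQ)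
    (hlam : 0 < lam1) (h : 2 * (f - lam1) + trQ * g ^ 2 < 0) :
    (∀ Δt > (0 : ℝ), ∀ lamh1, lam1 ≤ lamh1 →
      (1 + Δt * f) ^ 2 + Δt * trQ * g ^ 2 < (1 + Δt * lamh1) ^ 2)
    ∧ ∀ Δt > (0 : ℝ),
      Δt * (2 * (f - lam1) + trQ * g ^ 2) + Δt ^ 2 * (f ^ 2 - lam1 ^ 2) < 0 := by
  have hgt : 0 ≤ trQ * g ^ 2 := mul_nonneg htr (sq_nonneg g)
  have hflt : f < lam1 := by nlinarith
  have hsq : f ^ 2 < lam1 ^ 2 := by nlinarith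
  have key : ∀ Δt > (0:ℝ),
      Δt * (2 * (f - lam1) + trQ * g ^ 2) + Δt ^ 2 * (f ^ 2 - lam1 ^ 2) < 0 := by
    intro Δt hΔt
    have h1 : Δt * (2 * (f - lam1) + trQ * g ^ 2) < 0 := mul_neg_of_pos_of_neg hΔt h
    have h2 : Δt ^ 2 * (f ^ 2 - lam1 ^ 2) < 0 :=
      mul_neg_of_pos_of_neg (by positivity) (by linarith)
    linarith
  refine ⟨fun Δt hΔt lamh1 hl => ?_, key⟩
  have hk := key Δt hΔt
  have hmono : (1 + Δt * lam1) ^ 2 ≤ (1 + Δt * lamh1) ^ 2 := by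
    have h1 : 1 + Δt * lam1 ≤ 1 + Δt * lamh1 := by nlinarith
    have h0 : (0:ℝ) ≤ 1 + Δt * lam1 := by positivity
    exact pow_le_pow_left₀ h0 h1 2
  nlinarith [hk, hmono]
end
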